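/- Every nonempty Π⁰₁ class contains a member of computably enumerable degree: if P is a nonempty Π⁰₁ class of infinite binary sequences, then there exist A ∈ P and a computably enumerable set W ⊆ ℕ with A ≤_T W and W ≤_T A. In particular, the leftmost infinite path of any downward-closed computable set of binary strings with at least one infinite path is of computably enumerable degree. -/

import Mathlib

/-- Partial functions recursive in an oracle `O : ℕ → ℕ` (oracle partial recursion). -/
inductive RecursiveInNat (O : ℕ → ℕ) : (ℕ →. ℕ) → Prop
  | zero : RecursiveInNat O (pure 0)
  | succ : RecursiveInNat O Nat.succ
  | left : RecursiveInNat O ↑fun n : ℕ => n.unpair.1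
  | right : RecursiveInNat O ↑fun n : ℕ => n.unpair.2
  | oracle : RecursiveInNat O ↑O
  | pair {f g} : RecursiveInNat O f → RecursiveInNat O g →
      RecursiveInNat O fun n => Nat.pair <$> f n <*> g n
  | comp {f g} : RecursiveInNat O f → RecursiveInNat O g →
      RecursiveInNat O fun n => g n >>= f
  | prec {f g} : RecursiveInNat O f → RecursiveInNat O g →
      RecursiveInNat O (Nat.unpaired fun a n =>
        n.rec (f a) fun y IH => do let i ← IH; g (Nat.pair a (Nat.pair y i)))
  | rfind {f} : RecursiveInNat O f →
      RecursiveInNat O fun a => Nat.rfind fun n => (fun m => m = 0) <$> f (Nat.pair a n)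

/-- The oracle (characteristic function on `ℕ`) associated to a point of Cantor space. -/
def boolOracle (A : ℕ → Bool) : ℕ → ℕ := fun n => (A n).toNat

/-- Turing reducibility `A ≤ᵀ B` for points of Cantor space. -/
def TuringLE (A B : ℕ → Bool) : Prop :=
  RecursiveInNat (boolOracle B) fun n => Part.some ((A n).toNat)

/-- Strict Turing reducibility `A <ᵀ B`. -/
def TuringLT (A B : ℕ → Bool) : Prop :=
  TuringLE A B ∧ ¬ TuringLE B A

/-- `A` is computable iff it is reducible to the empty oracle. -/
def ComputableSet (A : ℕ → Bool) : Prop :=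
  TuringLE A fun _ => false

/-- `P` is a `Π⁰₁` class: the set of infinite paths through a computable,
downward-closed set of finite binary strings. -/
def IsPi01Class (P : Set (ℕ → Bool)) : Prop :=
  ∃ T : List Bool → Bool, Computable T ∧
    (∀ σ τ : List Bool, σ <+: τ → T τ = true → T σ = true) ∧
    ∀ A : ℕ → Bool, A ∈ P ↔ ∀ n : ℕ, T ((List.range n).map A) = true
/-- `W ⊆ ℕ` is computably enumerable: it is the domain of a partial computable function. -/
def CEset (W : Set ℕ) : Prop :=
  ∃ f : ℕ →. ℕ, Partrec f ∧ ∀ n, n ∈ W ↔ (f n).Dom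

open Classical in
/-- The oracle (characteristic function) associated to a set of naturals. -/
noncomputable def setOracle (W : Set ℕ) : ℕ → ℕ := fun n => if n ∈ W then 1 else 0

/-- `A` is of computably enumerable degree. -/
def OfCEDegree (A : ℕ → Bool) : Prop :=
  ∃ W : Set ℕ, CEset W ∧
    RecursiveInNat (setOracle W) (fun n => Part.some ((A n).toNat)) ∧
    RecursiveInNat (boolOracle A) (fun n => Part.some (setOracle W n))

/-- Lexicographic order on Cantor space, with `false < true`. -/
def LexLE (A B : ℕ → Bool) : Prop :=
  A = B ∨ ∃ n : ℕ, (∀ m < n, A m = B m) ∧ A n = false ∧ B n = true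

/-!
Let `A` be the leftmost path through the extendible part of `T`, and let `W` be the set of finite
strings lying strictly to the left of `A`. A string of length `n` is left of `A` iff it and all
strings of length `n` to its left are non-extendible; by compactness they all die at one finite
level, so `W` is c.e. Knowing `A` one knows its prefixes, hence `W`; conversely `W` computes `A`
bit by bit, since `A n = true` iff `(A ↾ n) ++ [false]` lies in `W`. Finally `A` is the
lexicographically least element of `P`, hence the only one.
-/

theorem RecursiveInNat.of_partrec {O : ℕ → ℕ} {f : ℕ →. ℕ} (hf : Nat.Partrec f) :
    RecursiveInNat O f := by
  induction hf with
  | zero => exact .zero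
  | succ => exact .succ
  | left => exact .left
  | right => exact .right
  | pair _ _ ihf ihg => exact .pair ihf ihg
  | comp _ _ ihf ihg => exact .comp ihf ihg
  | prec _ _ ihf ihg => exact .prec ihf ihg
  | rfind _ ihf => exact .rfind ihf

def ComputableInNat (O f : ℕ → ℕ) : Prop :=
  RecursiveInNat O fun n => Part.some (f n)

namespace ComputableInNat

variable {O f g : ℕ → ℕ}

theorem of_computable (hf : Computable f) : ComputableInNat O f :=
  RecursiveInNat.of_partrec (Partrec.nat_iff.1 hf)

theorem oracle : ComputableInNat O O := RecursiveInNat.oracle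

theorem comp (hf : ComputableInNat O f) (hg : ComputableInNat O g) :
    ComputableInNat O (f ∘ g) := by
  simpa only [ComputableInNat, Part.bind_eq_bind, Part.bind_some, Function.comp_apply]
    using RecursiveInNat.comp hf hg

theorem pair (hf : ComputableInNat O f) (hg : ComputableInNat O g) :
    ComputableInNat O fun n => Nat.pair (f n) (g n) := by
  simpa [ComputableInNat, Seq.seq] using RecursiveInNat.pair hf hg

theorem comp₂ {F : ℕ → ℕ → ℕ} (hF : Computable₂ F) (hf : ComputableInNat O f)
    (hg : ComputableInNat O g) : ComputableInNat O fun n => F (f n) (g n) := by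
  have hF' : Computable fun m : ℕ => F m.unpair.1 m.unpair.2 :=
    hF.comp (Computable.fst.comp Computable.unpair) (Computable.snd.comp Computable.unpair)
  simpa [Function.comp_def] using (of_computable hF').comp (hf.pair hg)

theorem of_succ_eq {v : ℕ → ℕ} {g : ℕ → ℕ → ℕ}
    (hg : ComputableInNat O fun m => g m.unpair.1 m.unpair.2) (hv : ∀ n, v (n + 1) = g n (v n)) :
    ComputableInNat O v := by
  have hstep : ComputableInNat O fun m => g m.unpair.2.unpair.1 m.unpair.2.unpair.2 :=
    hg.comp (of_computable (Computable.snd.comp Computable.unpair))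
  have hrec := RecursiveInNat.prec (of_computable (Computable.const (v 0))) hstep
  have hpair : ComputableInNat O (Nat.pair 0) :=
    of_computable (Primrec₂.natPair.comp (Primrec.const 0) Primrec.id).to_comp
  have hvrec : ∀ n, Nat.rec (motive := fun _ => Part ℕ) (Part.some (v 0))
      (fun y IH => IH.bind fun i => Part.some (g y i)) n = Part.some (v n) := by
    intro n
    induction n with
    | zero => rfl
    | succ n ih => simp [ih, hv]
  simpa only [ComputableInNat, Part.bind_eq_bind, Part.bind_some, Nat.unpaired, Nat.unpair_pair,
    hvrec] using RecursiveInNat.comp hrec hpair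

end ComputableInNat

theorem ComputablePred.comp {α β : Type*} [Primcodable α] [Primcodable β] {p : β → Prop}
    {f : α → β} (hp : ComputablePred p) (hf : Computable f) : ComputablePred fun a => p (f a) := by
  obtain ⟨_, hp⟩ := hp
  exact ⟨fun a => inferInstanceAs (Decidable (p (f a))), hp.comp hf⟩

theorem ComputablePred.forall_lt {α : Type*} [Primcodable α] {R : α → ℕ → Prop} {K : α → ℕ}
    (hR : ComputablePred fun p : α × ℕ => R p.1 p.2) (hK : Computable K) :
    ComputablePred fun a => ∀ y < K a, R a y := by
  obtain ⟨r, hr, hRr⟩ := ComputablePred.computable_iff.1 hR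
  have hstep : Computable₂ fun (a : α) (p : ℕ × Bool) => p.2 && r (a, p.1) :=
    (Primrec.and.to_comp.comp (Computable.snd.comp Computable.snd)
      (hr.comp (Computable.fst.pair (Computable.fst.comp Computable.snd)))).to₂
  refine ComputablePred.computable_iff.2
    ⟨_, Computable.nat_rec hK (Computable.const true) hstep, funext fun a => ?_⟩
  induction K a with
  | zero => simp
  | succ n ih =>
    have hRa : ∀ y, R a y ↔ r (a, y) = true := fun y => iff_of_eq (congrFun hRr (a, y))
    simp only [eq_iff_iff] at ih ⊢
    simp only [Bool.and_eq_true, ← ih, ← hRa, Nat.lt_succ_iff_lt_or_eq, or_imp, forall_and,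
      forall_eq]

theorem cEset_setOf_exists {R : ℕ → ℕ → Prop} (hR : ComputablePred fun p : ℕ × ℕ => R p.1 p.2) :
    CEset {m | ∃ N, R m N} := by
  obtain ⟨r, hr, hRr⟩ := ComputablePred.computable_iff.1 hR
  refine ⟨fun m => Nat.rfind (fun N => Part.some (r (m, N)) : ℕ →. Bool),
    Partrec.rfind (hr.to₂.partrec₂), fun m => ?_⟩
  have hRm : ∀ N, R m N ↔ r (m, N) = true := fun N => iff_of_eq (congrFun hRr (m, N))
  refine Iff.trans ?_ Nat.rfind_dom.symm
  simp only [Set.mem_ofPred_eq, hRm, Part.mem_some_iff, Part.some_dom, implies_true, and_true,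
    eq_comm]

namespace Pi01Class

variable {T : List Bool → Bool}

/-- Strings are read as binary numerals, most significant bit first, so that on strings of a fixed
length the numeric order is the lexicographic order. -/
def ofBits (l : List Bool) : ℕ := l.foldl (fun n b => 2 * n + b.toNat) 0

def toBits (n u : ℕ) : List Bool :=
  (List.range n).map fun i => decide (u / 2 ^ (n - 1 - i) % 2 = 1)

@[simp] lemma ofBits_nil : ofBits [] = 0 := rfl

lemma ofBits_append_singleton (l : List Bool) (b : Bool) :
    ofBits (l ++ [b]) = 2 * ofBits l + b.toNat := by
  simp [ofBits, List.foldl_append]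

lemma ofBits_lt_two_pow (l : List Bool) : ofBits l < 2 ^ l.length := by
  induction l using List.reverseRecOn with
  | nil => simp
  | append_singleton l b ih =>
    have := Bool.toNat_le b
    rw [ofBits_append_singleton, List.length_append, List.length_singleton, pow_succ]
    omega

@[simp] lemma length_toBits (n u : ℕ) : (toBits n u).length = n := by simp [toBits]

lemma toBits_succ (n u : ℕ) : toBits (n + 1) u = toBits n (u / 2) ++ [decide (u % 2 = 1)] := by
  rw [toBits, List.range_succ, List.map_append, toBits]
  congr 1
  · refine List.map_congr_left fun i hi => ?_
    have : n + 1 - 1 - i = (n - 1 - i) + 1 := by grind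
    rw [this, pow_succ, Nat.div_div_eq_div_mul, mul_comm]
  · simp

lemma ofBits_toBits {n u : ℕ} (hu : u < 2 ^ n) : ofBits (toBits n u) = u := by
  induction n generalizing u with
  | zero => simp_all [toBits]
  | succ n ih =>
    rw [toBits_succ, ofBits_append_singleton, ih (by rw [pow_succ] at hu; omega)]
    rcases Nat.mod_two_eq_zero_or_one u with h | h <;> simp [h] <;> omega

lemma toBits_ofBits (l : List Bool) : toBits l.length (ofBits l) = l := by
  induction l using List.reverseRecOn with
  | nil => rfl
  | append_singleton l b ih =>
    have := Bool.toNat_le b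
    rw [List.length_append, List.length_singleton, toBits_succ, ofBits_append_singleton,
      show (2 * ofBits l + b.toNat) / 2 = ofBits l by omega, ih]
    cases b <;> simp

lemma ofBits_injective_of_length_eq {l₁ l₂ : List Bool} (h : l₁.length = l₂.length)
    (hv : ofBits l₁ = ofBits l₂) : l₁ = l₂ := by
  rw [← toBits_ofBits l₁, ← toBits_ofBits l₂, h, hv]

lemma primrec₂_toBits : Primrec₂ toBits := by
  have hpow : Primrec₂ fun a b : ℕ => a ^ b := Primrec₂.unpaired'.1 Nat.Primrec.pow
  have hbit : Primrec fun x : (ℕ × ℕ) × ℕ => x.1.2 / 2 ^ (x.1.1 - 1 - x.2) % 2 :=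
    Primrec.nat_mod.comp
      (Primrec.nat_div.comp (Primrec.snd.comp Primrec.fst)
        (hpow.comp (Primrec.const 2)
          (Primrec.nat_sub.comp
            (Primrec.nat_sub.comp (Primrec.fst.comp Primrec.fst) (Primrec.const 1))
            Primrec.snd)))
      (Primrec.const 2)
  exact (Primrec.list_map (Primrec.list_range.comp Primrec.fst)
    (Primrec.eq.comp hbit (Primrec.const 1)).decide.to₂).to₂

def IsPrefixClosed (T : List Bool → Bool) : Prop :=
  ∀ σ τ : List Bool, σ <+: τ → T τ = true → T σ = true

def ExtendsTo (T : List Bool → Bool) (σ : List Bool) (N : ℕ) : Prop :=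
  ∃ s : List Bool, s.length = N ∧ T (σ ++ s) = true

def Extendible (T : List Bool → Bool) (σ : List Bool) : Prop :=
  ∀ N, ExtendsTo T σ N

lemma extendsTo_succ_iff {σ : List Bool} {N : ℕ} :
    ExtendsTo T σ (N + 1) ↔ ExtendsTo T (σ ++ [false]) N ∨ ExtendsTo T (σ ++ [true]) N := by
  constructor
  · rintro ⟨_ | ⟨b, s⟩, hs, hT⟩
    · simp at hs
    · cases b
      · exact .inl ⟨s, by simpa using hs, by simpa using hT⟩
      · exact .inr ⟨s, by simpa using hs, by simpa using hT⟩
  · rintro (⟨s, hs, hT⟩ | ⟨s, hs, hT⟩)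
    · exact ⟨false :: s, by simp [hs], by simpa using hT⟩
    · exact ⟨true :: s, by simp [hs], by simpa using hT⟩

lemma extendsTo_iff_exists_lt {σ : List Bool} {N : ℕ} :
    ExtendsTo T σ N ↔ ∃ w < 2 ^ N, T (σ ++ toBits N w) = true := by
  constructor
  · rintro ⟨s, rfl, hs⟩
    exact ⟨ofBits s, ofBits_lt_two_pow s, by rwa [toBits_ofBits]⟩
  · rintro ⟨w, -, hw⟩
    exact ⟨toBits N w, length_toBits N w, hw⟩

lemma extendible_map_range {A : ℕ → Bool} (hA : ∀ n, T ((List.range n).map A) = true) (n : ℕ) :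
    Extendible T ((List.range n).map A) := fun N =>
  ⟨(List.range N).map (A ∘ (n + ·)), by simp, by
    simpa [List.range_add, List.map_append, List.map_map] using hA (n + N)⟩

section PrefixClosed

variable (hT : IsPrefixClosed T)
include hT

lemma ExtendsTo.mono {σ : List Bool} {N M : ℕ} (h : ExtendsTo T σ M) (hNM : N ≤ M) :
    ExtendsTo T σ N := by
  obtain ⟨s, rfl, hs⟩ := h
  refine ⟨s.take N, by simp [hNM], hT _ _ ?_ hs⟩
  exact (List.prefix_append_right_inj σ).2 (List.take_prefix N s)

lemma Extendible.of_append {σ τ : List Bool} (h : Extendible T (σ ++ τ)) : Extendible T σ :=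
  fun N => by
    obtain ⟨s, hs, hsT⟩ := h N
    exact ExtendsTo.mono hT ⟨τ ++ s, rfl, by simpa using hsT⟩ (by simp [hs])

end PrefixClosed

lemma Extendible.apply_eq_true {σ : List Bool} (h : Extendible T σ) : T σ = true := by
  obtain ⟨s, hs, hsT⟩ := h 0
  simpa [List.length_eq_zero_iff.1 hs] using hsT

lemma Extendible.append_false_or_append_true (hT : IsPrefixClosed T) {σ : List Bool}
    (h : Extendible T σ) : Extendible T (σ ++ [false]) ∨ Extendible T (σ ++ [true]) := by
  by_contra! hdead
  obtain ⟨⟨N₀, h₀⟩, ⟨N₁, h₁⟩⟩ : (∃ N, ¬ExtendsTo T (σ ++ [false]) N) ∧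
      ∃ N, ¬ExtendsTo T (σ ++ [true]) N := by
    simpa only [Extendible, not_forall] using hdead
  rcases extendsTo_succ_iff.1 (h (N₀ + N₁ + 1)) with h' | h'
  · exact h₀ (h'.mono hT (by omega))
  · exact h₁ (h'.mono hT (by omega))

open Classical in
noncomputable def leftmostPrefix (T : List Bool → Bool) : ℕ → List Bool
  | 0 => []
  | n + 1 => leftmostPrefix T n ++ [!decide (Extendible T (leftmostPrefix T n ++ [false]))]

open Classical in
noncomputable def leftmostPath (T : List Bool → Bool) (n : ℕ) : Bool :=
  !decide (Extendible T (leftmostPrefix T n ++ [false]))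

lemma leftmostPrefix_succ (n : ℕ) :
    leftmostPrefix T (n + 1) = leftmostPrefix T n ++ [leftmostPath T n] := rfl

lemma leftmostPath_eq_false {n : ℕ} (h : Extendible T (leftmostPrefix T n ++ [false])) :
    leftmostPath T n = false := by
  simp [leftmostPath, h]

@[simp] lemma length_leftmostPrefix (n : ℕ) : (leftmostPrefix T n).length = n := by
  induction n with
  | zero => rfl
  | succ n ih => simp [leftmostPrefix_succ, ih]

lemma map_range_leftmostPath (n : ℕ) :
    (List.range n).map (leftmostPath T) = leftmostPrefix T n := by
  induction n with
  | zero => rfl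
  | succ n ih => rw [List.range_succ, List.map_append, ih, leftmostPrefix_succ]; rfl

lemma ofBits_leftmostPrefix_succ (n : ℕ) :
    ofBits (leftmostPrefix T (n + 1)) =
      2 * ofBits (leftmostPrefix T n) + (leftmostPath T n).toNat :=
  ofBits_append_singleton _ _

lemma extendible_leftmostPrefix (hT : IsPrefixClosed T) (hroot : Extendible T []) (n : ℕ) :
    Extendible T (leftmostPrefix T n) := by
  induction n with
  | zero => exact hroot
  | succ n ih =>
    rw [leftmostPrefix_succ]
    by_cases h : Extendible T (leftmostPrefix T n ++ [false])
    · rwa [leftmostPath_eq_false h]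
    · simpa [leftmostPath, h] using (ih.append_false_or_append_true hT).resolve_left h

lemma ofBits_leftmostPrefix_le (hT : IsPrefixClosed T) {τ : List Bool} (hτ : Extendible T τ) :
    ofBits (leftmostPrefix T τ.length) ≤ ofBits τ := by
  induction τ using List.reverseRecOn with
  | nil => exact le_rfl
  | append_singleton τ b ih =>
    have hle := ih (hτ.of_append hT)
    rw [List.length_append, List.length_singleton, ofBits_leftmostPrefix_succ,
      ofBits_append_singleton]
    have := Bool.toNat_le (leftmostPath T τ.length)
    rcases hle.lt_or_eq with hlt | heq
    · omega
    · have hpfx : leftmostPrefix T τ.length = τ := ofBits_injective_of_length_eq (by simp) heq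
      cases b
      · rw [leftmostPath_eq_false (by rwa [hpfx]), heq]
      · simp only [Bool.toNat_true]; omega

lemma lexLE_of_forall_ofBits_le {A B : ℕ → Bool}
    (h : ∀ n, ofBits ((List.range n).map A) ≤ ofBits ((List.range n).map B)) : LexLE A B := by
  classical
  by_cases hAB : A = B
  · exact .inl hAB
  have hne : ∃ n, A n ≠ B n := Function.ne_iff.1 hAB
  set n := Nat.find hne
  have hagree : ∀ m < n, A m = B m := fun m hm => not_not.1 (Nat.find_min hne hm)
  have hprefix : (List.range n).map A = (List.range n).map B :=
    List.map_congr_left fun m hm => hagree m (List.mem_range.1 hm)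
  have hbit := h (n + 1)
  rw [List.range_succ, List.map_append, List.map_append, hprefix, List.map_singleton,
    List.map_singleton, ofBits_append_singleton, ofBits_append_singleton] at hbit
  have : A n ≠ B n := Nat.find_spec hne
  refine .inr ⟨n, hagree, ?_⟩
  cases hA : A n <;> cases hB : B n <;> simp_all

lemma LexLE.antisymm {A B : ℕ → Bool} (hAB : LexLE A B) (hBA : LexLE B A) : A = B := by
  rcases hAB with hAB | ⟨n, hn, hAn, hBn⟩
  · exact hAB
  rcases hBA with hBA | ⟨m, hm, hBm, hAm⟩
  · exact hBA.symm
  rcases lt_trichotomy n m with h | rfl | h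
  · simpa [hAn, hBn] using hm n h
  · simp [hAn] at hAm
  · simpa [hAm, hBm] using hn m h

lemma not_extendsTo_iff {σ : List Bool} {N : ℕ} :
    ¬ExtendsTo T σ N ↔ ∀ w < 2 ^ N, T (σ ++ toBits N w) = false := by
  simp [extendsTo_iff_exists_lt]

lemma computablePred_not_extendsTo (hTc : Computable T) :
    ComputablePred fun p : List Bool × ℕ => ¬ExtendsTo T p.1 p.2 := by
  have hpow : Computable fun p : List Bool × ℕ => 2 ^ p.2 :=
    (Primrec₂.unpaired'.1 Nat.Primrec.pow).to_comp.comp (Computable.const 2) Computable.snd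
  have hleaf : ComputablePred fun q : (List Bool × ℕ) × ℕ =>
      T (q.1.1 ++ toBits q.1.2 q.2) = false :=
    ComputablePred.computable_iff.2 ⟨_, Primrec.not.to_comp.comp (hTc.comp
      (Primrec.list_append.to_comp.comp (Computable.fst.comp Computable.fst)
        (primrec₂_toBits.to_comp.comp (Computable.snd.comp Computable.fst) Computable.snd))),
      funext fun q => by simp⟩
  exact (ComputablePred.forall_lt hleaf hpow).of_eq fun p => not_extendsTo_iff.symm

lemma lexLE_leftmostPath (hT : IsPrefixClosed T) {B : ℕ → Bool}
    (hB : ∀ n, T ((List.range n).map B) = true) : LexLE (leftmostPath T) B :=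
  lexLE_of_forall_ofBits_le fun n => by
    simpa [map_range_leftmostPath] using ofBits_leftmostPrefix_le hT (extendible_map_range hB n)

lemma leftmostPath_mem (hT : IsPrefixClosed T) (hroot : Extendible T []) (n : ℕ) :
    T ((List.range n).map (leftmostPath T)) = true := by
  rw [map_range_leftmostPath]
  exact (extendible_leftmostPrefix hT hroot n).apply_eq_true

/-- The code `Nat.pair n v` stands for the string `toBits n v`; the set collects the strings lying
strictly to the left of the leftmost path. -/
def leftSet (T : List Bool → Bool) : Set ℕ :=
  {m | m.unpair.2 < ofBits (leftmostPrefix T m.unpair.1)}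

lemma mem_leftSet_iff (hT : IsPrefixClosed T) (hroot : Extendible T []) {m : ℕ} :
    m ∈ leftSet T ↔ ∃ N, ∀ u < m.unpair.2 + 1, ¬ExtendsTo T (toBits m.unpair.1 u) N := by
  set n := m.unpair.1
  have hlt : ofBits (leftmostPrefix T n) < 2 ^ n := by
    simpa using ofBits_lt_two_pow (leftmostPrefix T n)
  constructor
  · intro hm
    have hdead : ∀ u ∈ Finset.range (m.unpair.2 + 1),
        ∀ᶠ N in Filter.atTop, ¬ExtendsTo T (toBits n u) N := by
      intro u hmem
      have hu : u < ofBits (leftmostPrefix T n) :=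
        (Nat.lt_succ_iff.1 (Finset.mem_range.1 hmem)).trans_lt hm
      have hnot : ¬Extendible T (toBits n u) := fun hext => by
        have := ofBits_leftmostPrefix_le hT hext
        rw [length_toBits, ofBits_toBits (hu.trans hlt)] at this
        omega
      obtain ⟨N, hN⟩ := not_forall.1 hnot
      exact Filter.eventually_atTop.2 ⟨N, fun M hM hext => hN (hext.mono hT hM)⟩
    obtain ⟨N, hN⟩ := ((Filter.eventually_all_finset _).2 hdead).exists
    exact ⟨N, fun u hu => hN u (Finset.mem_range.2 hu)⟩
  · rintro ⟨N, hN⟩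
    by_contra hle
    have htoBits : toBits n (ofBits (leftmostPrefix T n)) = leftmostPrefix T n := by
      simpa using toBits_ofBits (leftmostPrefix T n)
    refine hN (ofBits (leftmostPrefix T n)) (Nat.lt_succ_of_le (not_lt.1 hle)) ?_
    rw [htoBits]
    exact extendible_leftmostPrefix hT hroot n N

lemma cEset_leftSet (hTc : Computable T) (hT : IsPrefixClosed T) (hroot : Extendible T []) :
    CEset (leftSet T) := by
  have hwitness : ComputablePred fun p : ℕ × ℕ =>
      ∀ u < p.1.unpair.2 + 1, ¬ExtendsTo T (toBits p.1.unpair.1 u) p.2 :=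
    ComputablePred.forall_lt ((computablePred_not_extendsTo hTc).comp
      ((primrec₂_toBits.comp (Primrec.fst.comp (Primrec.unpair.comp (Primrec.fst.comp
        Primrec.fst))) Primrec.snd).pair (Primrec.snd.comp Primrec.fst)).to_comp)
      (Primrec.succ.comp (Primrec.snd.comp (Primrec.unpair.comp Primrec.fst))).to_comp
  rw [show leftSet T = _ from Set.ext fun m => mem_leftSet_iff hT hroot]
  exact cEset_setOf_exists hwitness

/-- `Nat.pair (n + 1) (2 * ofBits σ)` codes `σ ++ [false]`, which lies left of the path iff the
path continues `σ` with `true`. -/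
lemma setOracle_leftSet_pair (n : ℕ) :
    setOracle (leftSet T) (Nat.pair (n + 1) (2 * ofBits (leftmostPrefix T n))) =
      (leftmostPath T n).toNat := by
  cases h : leftmostPath T n <;>
    simp [setOracle, leftSet, ofBits_leftmostPrefix_succ, h]

lemma computableInNat_ofBits_leftmostPrefix {O : ℕ → ℕ} {q : ℕ → ℕ → ℕ} (hq : Computable₂ q)
    (hbit : ∀ n, O (q n (ofBits (leftmostPrefix T n))) = (leftmostPath T n).toNat) :
    ComputableInNat O fun n => ofBits (leftmostPrefix T n) :=
  ComputableInNat.of_succ_eq (g := fun n x => 2 * x + O (q n x))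
    (ComputableInNat.comp₂ Primrec.nat_add.to_comp
      (ComputableInNat.of_computable
        (Primrec.nat_mul.comp (Primrec.const 2) (Primrec.snd.comp Primrec.unpair)).to_comp)
      (ComputableInNat.oracle.comp (ComputableInNat.of_computable
        (hq.comp (Computable.fst.comp Computable.unpair) (Computable.snd.comp Computable.unpair)))))
    fun n => by rw [ofBits_leftmostPrefix_succ, hbit]

theorem computableInNat_leftmostPath :
    ComputableInNat (setOracle (leftSet T)) fun n => (leftmostPath T n).toNat := by
  have hq : Computable₂ fun n x : ℕ => Nat.pair (n + 1) (2 * x) :=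
    Primrec₂.natPair.to_comp.comp (Primrec.succ.to_comp.comp Computable.fst)
      (Primrec.nat_mul.to_comp.comp (Computable.const 2) Computable.snd)
  have hprefix := computableInNat_ofBits_leftmostPrefix hq (setOracle_leftSet_pair (T := T))
  simpa only [Function.comp_def, id, setOracle_leftSet_pair] using ComputableInNat.oracle.comp
    (ComputableInNat.comp₂ hq (ComputableInNat.of_computable Computable.id) hprefix)

theorem computableInNat_leftSet :
    ComputableInNat (boolOracle (leftmostPath T)) (setOracle (leftSet T)) := by
  have hprefix := computableInNat_ofBits_leftmostPrefix (O := boolOracle (leftmostPath T))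
    (q := fun n _ => n) Computable.fst fun _ => rfl
  have hlt : Computable₂ fun a b : ℕ => if a < b then 1 else 0 :=
    (Primrec.ite Primrec.nat_lt (Primrec.const 1) (Primrec.const 0)).to_comp
  convert ComputableInNat.comp₂ hlt
    (ComputableInNat.of_computable (Primrec.snd.comp Primrec.unpair).to_comp)
    (hprefix.comp (ComputableInNat.of_computable (Primrec.fst.comp Primrec.unpair).to_comp))
    using 2 with m
  simp only [setOracle, leftSet, Set.mem_ofPred_eq]
  congr

theorem ofCEDegree_leftmostPath (hTc : Computable T) (hT : IsPrefixClosed T)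
    (hroot : Extendible T []) : OfCEDegree (leftmostPath T) :=
  ⟨leftSet T, cEset_leftSet hTc hT hroot, computableInNat_leftmostPath,
    computableInNat_leftSet⟩

end Pi01Class

open Pi01Class in
/-- Every nonempty `Π⁰₁` class contains a member of c.e. degree; in particular
the leftmost path of such a class is of c.e. degree. -/
theorem Pi01_class_has_member_of_ce_degree (P : Set (ℕ → Bool))
    (hP : IsPi01Class P) (hne : P.Nonempty) :
    (∃ A ∈ P, OfCEDegree A) ∧
      ∀ A ∈ P, (∀ B ∈ P, LexLE A B) → OfCEDegree A := by
  obtain ⟨T, hTc, hT, hPT⟩ := hP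
  obtain ⟨B, hB⟩ := hne
  have hroot : Extendible T [] := extendible_map_range ((hPT B).1 hB) 0
  have hmem : leftmostPath T ∈ P := (hPT _).2 (leftmostPath_mem hT hroot)
  have hdeg := ofCEDegree_leftmostPath hTc hT hroot
  refine ⟨⟨_, hmem, hdeg⟩, fun A hA hleast => ?_⟩
  rwa [(hleast _ hmem).antisymm (lexLE_leftmostPath hT ((hPT A).1 hA))]
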